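/- Let A ∈ Mₙ(ℍ) be partitioned as A = [[A₁₁, A₁₂],[A₂₁, A₂₂]] and let Ã = [[‖A₁₁‖₂, ‖A₁₂‖₂],[‖A₂₁‖₂, ‖A₂₂‖₂]]. Then the right spectral radius of A is at most the spectral radius of Ã: ρ_r(A) ≤ ρ_r(Ã). -/
import Mathlib


open scoped Matrix Quaternion BigOperators

noncomputable section

/-- Euclidean norm of a vector with entries in a normed ring (e.g. the quaternions). -/
def qVecNorm {R : Type*} [NormedRing R] {n : Type*} [Fintype n] (x : n → R) : ℝ :=
  Real.sqrt (∑ i, ‖x i‖ ^ 2)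

/-- Operator 2-norm (spectral norm) of a matrix over a normed ring. -/
def qSpecNorm {R : Type*} [NormedRing R] {m n : Type*} [Fintype m] [Fintype n]
    (A : Matrix m n R) : ℝ :=
  sSup {c : ℝ | ∃ x : n → R, x ≠ 0 ∧ c = qVecNorm (A.mulVec x) / qVecNorm x}

/-- `μ` is a right eigenvalue of the quaternionic matrix `A`. -/
def RightEig {n : Type*} [Fintype n] (A : Matrix n n ℍ[ℝ]) (μ : ℍ[ℝ]) : Prop :=
  ∃ x : n → ℍ[ℝ], x ≠ 0 ∧ A.mulVec x = fun i => x i * μ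

/-- Right spectral radius of a quaternionic matrix. -/
def rSpecRad {n : Type*} [Fintype n] (A : Matrix n n ℍ[ℝ]) : ℝ :=
  sSup {r : ℝ | ∃ μ : ℍ[ℝ], RightEig A μ ∧ r = ‖μ‖}

/-- Spectral radius of a real 2×2 matrix. -/
def realSpecRad (B : Matrix (Fin 2) (Fin 2) ℝ) : ℝ :=
  sSup {r : ℝ | ∃ μ ∈ spectrum ℝ B, r = |μ|}

/-! ### Auxiliary lemmas -/

lemma qVecNorm_nonneg' {R : Type*} [NormedRing R] {n : Type*} [Fintype n] (x : n → R) :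
    0 ≤ qVecNorm x := Real.sqrt_nonneg _

lemma qVecNorm_pos' {R : Type*} [NormedRing R] {n : Type*} [Fintype n] {x : n → R}
    (hx : x ≠ 0) : 0 < qVecNorm x := by
  have : ∃ i, x i ≠ 0 := by
    by_contra h
    push_neg at h
    exact hx (funext h)
  obtain ⟨i, hi⟩ := this
  apply Real.sqrt_pos.2
  calc (0:ℝ) < ‖x i‖ ^ 2 := pow_pos (norm_pos_iff.2 hi) 2
    _ ≤ ∑ j, ‖x j‖ ^ 2 := Finset.single_le_sum (f := fun j => ‖x j‖^2)
        (fun j _ => by positivity) (Finset.mem_univ i)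

lemma qVecNorm_add_le' {R : Type*} [NormedRing R] {n : Type*} [Fintype n] (x y : n → R) :
    qVecNorm (x + y) ≤ qVecNorm x + qVecNorm y := by
  have ex : ∀ z : n → R, qVecNorm z = ‖(WithLp.equiv 2 (n → ℝ)).symm (fun i => ‖z i‖)‖ := by
    intro z
    rw [EuclideanSpace.norm_eq]
    simp [qVecNorm]
  rw [ex x, ex y]
  calc qVecNorm (x + y)
      ≤ ‖(WithLp.equiv 2 (n → ℝ)).symm ((fun i => ‖x i‖) + (fun i => ‖y i‖))‖ := by
        rw [EuclideanSpace.norm_eq]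
        apply Real.sqrt_le_sqrt
        apply Finset.sum_le_sum
        intro i _
        have h2 : ‖x i + y i‖ ≤ |‖x i‖ + ‖y i‖| :=
          le_trans (norm_add_le (x i) (y i)) (le_abs_self _)
        calc ‖(x+y) i‖^2 = ‖x i + y i‖^2 := rfl
          _ ≤ |‖x i‖ + ‖y i‖|^2 := pow_le_pow_left₀ (norm_nonneg _) h2 2
          _ = ‖((WithLp.equiv 2 (n → ℝ)).symm ((fun i => ‖x i‖) + (fun i => ‖y i‖))) i‖^2 := by
              simp [Real.norm_eq_abs]
      _ ≤ _ := by
        have := norm_add_le ((WithLp.equiv 2 (n → ℝ)).symm (fun i => ‖x i‖))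
          ((WithLp.equiv 2 (n → ℝ)).symm (fun i => ‖y i‖))
        simpa using this

lemma mulVec_frob' {R : Type*} [NormedRing R] {m n : Type*} [Fintype m] [Fintype n]
    (A : Matrix m n R) (x : n → R) :
    qVecNorm (A.mulVec x) ≤ Real.sqrt (∑ i, ∑ j, ‖A i j‖^2) * qVecNorm x := by
  rw [qVecNorm, qVecNorm, ← Real.sqrt_mul (by positivity)]
  apply Real.sqrt_le_sqrt
  rw [Finset.sum_mul]
  apply Finset.sum_le_sum
  intro i _
  have h1 : ‖A.mulVec x i‖ ≤ ∑ j, ‖A i j‖ * ‖x j‖ := by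
    rw [Matrix.mulVec, dotProduct]
    exact norm_sum_le_of_le _ (fun j _ => norm_mul_le _ _)
  have h2 : (∑ j, ‖A i j‖ * ‖x j‖)^2 ≤ (∑ j, ‖A i j‖^2) * (∑ j, ‖x j‖^2) :=
    Finset.sum_mul_sq_le_sq_mul_sq _ _ _
  calc ‖A.mulVec x i‖^2 ≤ (∑ j, ‖A i j‖ * ‖x j‖)^2 :=
        pow_le_pow_left₀ (norm_nonneg _) h1 2
    _ ≤ (∑ j, ‖A i j‖^2) * (∑ j, ‖x j‖^2) := h2

lemma qSpecNorm_nonneg' {R : Type*} [NormedRing R] {m n : Type*} [Fintype m] [Fintype n]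
    (A : Matrix m n R) : 0 ≤ qSpecNorm A := by
  apply Real.sSup_nonneg
  rintro c ⟨x, hx, rfl⟩
  exact div_nonneg (qVecNorm_nonneg' _) (qVecNorm_nonneg' _)

lemma qSpecNorm_bdd' {R : Type*} [NormedRing R] {m n : Type*} [Fintype m] [Fintype n]
    (A : Matrix m n R) :
    BddAbove {c : ℝ | ∃ x : n → R, x ≠ 0 ∧ c = qVecNorm (A.mulVec x) / qVecNorm x} := by
  refine ⟨Real.sqrt (∑ i, ∑ j, ‖A i j‖^2), ?_⟩
  rintro c ⟨x, hx, rfl⟩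
  rw [div_le_iff₀ (qVecNorm_pos' hx)]
  exact mulVec_frob' A x

lemma qSpecNorm_mulVec_le' {R : Type*} [NormedRing R] {m n : Type*} [Fintype m] [Fintype n]
    (A : Matrix m n R) (x : n → R) :
    qVecNorm (A.mulVec x) ≤ qSpecNorm A * qVecNorm x := by
  by_cases hx : x = 0
  · subst hx
    simp only [Matrix.mulVec_zero]
    have h1 : qVecNorm (0 : m → R) = 0 := by simp [qVecNorm]
    have h0 : qVecNorm (0 : n → R) = 0 := by simp [qVecNorm]
    rw [h1, h0, mul_zero]
  · have hmem : qVecNorm (A.mulVec x) / qVecNorm x ∈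
        {c : ℝ | ∃ y : n → R, y ≠ 0 ∧ c = qVecNorm (A.mulVec y) / qVecNorm y} :=
      ⟨x, hx, rfl⟩
    have := le_csSup (qSpecNorm_bdd' A) hmem
    rw [div_le_iff₀ (qVecNorm_pos' hx)] at this
    exact this

lemma mem_spec_iff' (a b c d μ : ℝ) :
    μ ∈ spectrum ℝ !![a,b;c,d] ↔ (μ - a)*(μ - d) - b*c = 0 := by
  rw [spectrum.mem_iff, Matrix.isUnit_iff_isUnit_det, isUnit_iff_ne_zero, not_ne_iff]
  have : (algebraMap ℝ (Matrix (Fin 2) (Fin 2) ℝ) μ - !![a,b;c,d]).det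
      = (μ - a)*(μ - d) - b*c := by
    simp only [Matrix.det_fin_two, Matrix.sub_apply, Matrix.algebraMap_matrix_apply,
      Matrix.one_apply, Matrix.cons_val', Matrix.cons_val_zero, Matrix.cons_val_one,
      Matrix.head_cons, Matrix.head_fin_const, Matrix.empty_val', Matrix.cons_val_fin_one]
    norm_num
  rw [this]

lemma root_le_lam' {a b c d μ : ℝ} (ha : 0 ≤ a) (hb : 0 ≤ b) (hc : 0 ≤ c) (hd : 0 ≤ d)
    (h : (μ - a)*(μ - d) - b*c = 0) :
    |μ| ≤ (a + d + Real.sqrt ((a-d)^2 + 4*b*c))/2 := by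
  set q := Real.sqrt ((a-d)^2 + 4*b*c) with hq
  have hq0 : 0 ≤ q := Real.sqrt_nonneg _
  have hq2 : q^2 = (a-d)^2 + 4*b*c := Real.sq_sqrt (by positivity)
  rw [abs_le]
  constructor
  · nlinarith [sq_nonneg (a + d - 2*μ - q), sq_nonneg (a+d-2*μ)]
  · nlinarith [sq_nonneg (2*μ - a - d - q), sq_nonneg (2*μ-a-d)]

lemma lam_is_root' {a b c d : ℝ} (hb : 0 ≤ b) (hc : 0 ≤ c) :
    ((a + d + Real.sqrt ((a-d)^2 + 4*b*c))/2 - a) * ((a + d + Real.sqrt ((a-d)^2 + 4*b*c))/2 - d)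
      - b*c = 0 := by
  have hq2 : Real.sqrt ((a-d)^2 + 4*b*c)^2 = (a-d)^2 + 4*b*c :=
    Real.sq_sqrt (by positivity)
  nlinarith [hq2]

lemma s_le_lam' {a b c d s v₁ v₂ : ℝ} (ha : 0 ≤ a) (hb : 0 ≤ b) (hc : 0 ≤ c) (hd : 0 ≤ d)
    (hs : 0 ≤ s) (hv₁ : 0 ≤ v₁) (hv₂ : 0 ≤ v₂) (hv : ¬(v₁ = 0 ∧ v₂ = 0))
    (h1 : s * v₁ ≤ a * v₁ + b * v₂) (h2 : s * v₂ ≤ c * v₁ + d * v₂) :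
    s ≤ (a + d + Real.sqrt ((a-d)^2 + 4*b*c))/2 := by
  set q := Real.sqrt ((a-d)^2 + 4*b*c) with hq
  have hq0 : 0 ≤ q := Real.sqrt_nonneg _
  have hq2 : q^2 = (a-d)^2 + 4*b*c := Real.sq_sqrt (by positivity)
  have habs : |a - d| ≤ q := by
    rw [hq, ← Real.sqrt_sq_eq_abs]
    exact Real.sqrt_le_sqrt (by nlinarith)
  have habs1 := le_abs_self (a-d)
  have habs2 := neg_abs_le (a-d)
  have hla : a ≤ (a+d+q)/2 := by linarith
  have hld : d ≤ (a+d+q)/2 := by linarith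
  by_cases hv1 : v₁ = 0
  · subst hv1
    have hv2 : 0 < v₂ := lt_of_le_of_ne hv₂ (fun h => hv ⟨rfl, h.symm⟩)
    have : s ≤ d := by nlinarith
    linarith
  · by_cases hv2 : v₂ = 0
    · subst hv2
      have hv1' : 0 < v₁ := lt_of_le_of_ne hv₁ (Ne.symm hv1)
      have : s ≤ a := by nlinarith
      linarith
    · have hv1p : 0 < v₁ := lt_of_le_of_ne hv₁ (Ne.symm hv1)
      have hv2p : 0 < v₂ := lt_of_le_of_ne hv₂ (Ne.symm hv2)
      by_contra hcon
      push_neg at hcon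
      have hsa : a < s := lt_of_le_of_lt hla hcon
      have hsd : d < s := lt_of_le_of_lt hld hcon
      have e1 : (s-a)*v₁ ≤ b*v₂ := by nlinarith
      have e2 : (s-d)*v₂ ≤ c*v₁ := by nlinarith
      have e3 : ((s-a)*v₁)*((s-d)*v₂) ≤ (b*v₂)*(c*v₁) :=
        mul_le_mul e1 e2 (mul_nonneg (by linarith) hv₂) (mul_nonneg hb hv₂)
      have e4 : (s-a)*(s-d) ≤ b*c := by
        have hpos : 0 < v₁ * v₂ := mul_pos hv1p hv2p
        have : (s-a)*(s-d)*(v₁*v₂) ≤ b*c*(v₁*v₂) := by nlinarith [e3]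
        exact le_of_mul_le_mul_right this hpos
      have h5 : q < 2*s - a - d := by linarith
      nlinarith [mul_self_lt_mul_self hq0 h5, hq2, e4]

lemma lam_le_realSpecRad' {a b c d : ℝ} (ha : 0 ≤ a) (hb : 0 ≤ b) (hc : 0 ≤ c) (hd : 0 ≤ d) :
    (a + d + Real.sqrt ((a-d)^2 + 4*b*c))/2 ≤ realSpecRad !![a,b;c,d] := by
  set lam := (a + d + Real.sqrt ((a-d)^2 + 4*b*c))/2 with hlam
  have hlam0 : 0 ≤ lam := by
    have := Real.sqrt_nonneg ((a-d)^2 + 4*b*c)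
    rw [hlam]; linarith
  have hmem : lam ∈ {r : ℝ | ∃ μ ∈ spectrum ℝ !![a,b;c,d], r = |μ|} :=
    ⟨lam, (mem_spec_iff' a b c d lam).2 (lam_is_root' hb hc), (abs_of_nonneg hlam0).symm⟩
  have hbdd : BddAbove {r : ℝ | ∃ μ ∈ spectrum ℝ !![a,b;c,d], r = |μ|} := by
    refine ⟨lam, ?_⟩
    rintro r ⟨μ, hμ, rfl⟩
    exact root_le_lam' ha hb hc hd ((mem_spec_iff' a b c d μ).1 hμ)
  exact le_csSup hbdd hmem

lemma qVecNorm_smul_right (n : Type*) [Fintype n] (x : n → ℍ[ℝ]) (μ : ℍ[ℝ]) :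
    qVecNorm (fun i => x i * μ) = qVecNorm x * ‖μ‖ := by
  simp only [qVecNorm, norm_mul, mul_pow]
  rw [← Finset.sum_mul, Real.sqrt_mul (by positivity), Real.sqrt_sq (norm_nonneg μ)]

theorem rSpecRad_fromBlocks_le (n₁ n₂ : ℕ)
    (A11 : Matrix (Fin n₁) (Fin n₁) ℍ[ℝ]) (A12 : Matrix (Fin n₁) (Fin n₂) ℍ[ℝ])
    (A21 : Matrix (Fin n₂) (Fin n₁) ℍ[ℝ]) (A22 : Matrix (Fin n₂) (Fin n₂) ℍ[ℝ]) :
    rSpecRad (Matrix.fromBlocks A11 A12 A21 A22) ≤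
      realSpecRad !![qSpecNorm A11, qSpecNorm A12; qSpecNorm A21, qSpecNorm A22] := by
  set a := qSpecNorm A11
  set b := qSpecNorm A12
  set c := qSpecNorm A21
  set d := qSpecNorm A22
  have ha : 0 ≤ a := qSpecNorm_nonneg' _
  have hb : 0 ≤ b := qSpecNorm_nonneg' _
  have hc : 0 ≤ c := qSpecNorm_nonneg' _
  have hd : 0 ≤ d := qSpecNorm_nonneg' _
  have hlam := lam_le_realSpecRad' ha hb hc hd
  have hlam0 : 0 ≤ (a + d + Real.sqrt ((a-d)^2 + 4*b*c))/2 := by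
    have := Real.sqrt_nonneg ((a-d)^2 + 4*b*c)
    linarith
  apply Real.sSup_le _ (le_trans hlam0 hlam)
  rintro r ⟨μ, ⟨x, hx, heig⟩, rfl⟩
  refine le_trans ?_ hlam
  set x₁ : Fin n₁ → ℍ[ℝ] := fun i => x (Sum.inl i) with hx₁
  set x₂ : Fin n₂ → ℍ[ℝ] := fun i => x (Sum.inr i) with hx₂
  have hxsum : x = Sum.elim x₁ x₂ := by funext i; cases i <;> rfl
  rw [hxsum, Matrix.fromBlocks_mulVec] at heig
  have h1 : A11.mulVec x₁ + A12.mulVec x₂ = fun i => x₁ i * μ := by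
    funext i
    exact congrFun heig (Sum.inl i)
  have h2 : A21.mulVec x₁ + A22.mulVec x₂ = fun i => x₂ i * μ := by
    funext i
    exact congrFun heig (Sum.inr i)
  have key1 : ‖μ‖ * qVecNorm x₁ ≤ a * qVecNorm x₁ + b * qVecNorm x₂ := by
    calc ‖μ‖ * qVecNorm x₁ = qVecNorm (fun i => x₁ i * μ) := by
          rw [qVecNorm_smul_right, mul_comm]
      _ = qVecNorm (A11.mulVec x₁ + A12.mulVec x₂) := by rw [h1]
      _ ≤ qVecNorm (A11.mulVec x₁) + qVecNorm (A12.mulVec x₂) := qVecNorm_add_le' _ _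
      _ ≤ a * qVecNorm x₁ + b * qVecNorm x₂ :=
          add_le_add (qSpecNorm_mulVec_le' A11 x₁) (qSpecNorm_mulVec_le' A12 x₂)
  have key2 : ‖μ‖ * qVecNorm x₂ ≤ c * qVecNorm x₁ + d * qVecNorm x₂ := by
    calc ‖μ‖ * qVecNorm x₂ = qVecNorm (fun i => x₂ i * μ) := by
          rw [qVecNorm_smul_right, mul_comm]
      _ = qVecNorm (A21.mulVec x₁ + A22.mulVec x₂) := by rw [h2]
      _ ≤ qVecNorm (A21.mulVec x₁) + qVecNorm (A22.mulVec x₂) := qVecNorm_add_le' _ _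
      _ ≤ c * qVecNorm x₁ + d * qVecNorm x₂ :=
          add_le_add (qSpecNorm_mulVec_le' A21 x₁) (qSpecNorm_mulVec_le' A22 x₂)
  have hv : ¬(qVecNorm x₁ = 0 ∧ qVecNorm x₂ = 0) := by
    rintro ⟨hz1, hz2⟩
    have hx1 : x₁ = 0 := by
      by_contra h
      exact absurd hz1 (ne_of_gt (qVecNorm_pos' h))
    have hx2 : x₂ = 0 := by
      by_contra h
      exact absurd hz2 (ne_of_gt (qVecNorm_pos' h))
    apply hx
    rw [hxsum, hx1, hx2]
    funext i
    cases i <;> rfl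
  exact s_le_lam' ha hb hc hd (norm_nonneg μ) (qVecNorm_nonneg' x₁) (qVecNorm_nonneg' x₂)
    hv key1 key2
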